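/- For every ℓ : 𝒜 → ℝ the second partial derivatives of the unordered-pair preference loss L_p exist and are given by: for i ≠ j, ∂²L_p/∂ℓ(j)∂ℓ(i) = −(α²/|𝒜|²)·w_{ij}(ℓ), and for i = j, ∂²L_p/∂ℓ(i)² = (α²/|𝒜|²)·Σ_{b ≠ i} w_{ib}(ℓ), where w_{ab}(ℓ) = P_{ab}(ℓ)·(1 − P_{ab}(ℓ)). -/

import Mathlib

open Finset

/-- The logistic (sigmoid) function σ(z) = 1/(1+e^{-z}). -/
noncomputable def sigmoid (z : ℝ) : ℝ := 1 / (1 + Real.exp (-z))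

/-- Bradley–Terry target probability P*_{ab} = σ(β(Q a − Q b)). -/
noncomputable def Pstar {A : Type*} (β : ℝ) (Q : A → ℝ) (a b : A) : ℝ :=
  sigmoid (β * (Q a - Q b))

/-- Model probability P_{ab}(ℓ) = σ(α(ℓ a − ℓ b)). -/
noncomputable def Pmod {A : Type*} (α : ℝ) (ℓ : A → ℝ) (a b : A) : ℝ :=
  sigmoid (α * (ℓ a - ℓ b))

/-- Hessian weight w_{ab}(ℓ) = P_{ab}(ℓ)(1 − P_{ab}(ℓ)). -/
noncomputable def hessW {A : Type*} (α : ℝ) (ℓ : A → ℝ) (a b : A) : ℝ :=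
  Pmod α ℓ a b * (1 - Pmod α ℓ a b)

/-- Unordered-pair (distinct-pair) preference loss L_p(ℓ). -/
noncomputable def lossP {A : Type*} [Fintype A] [DecidableEq A] (α β : ℝ) (Q : A → ℝ)
    (ℓ : A → ℝ) : ℝ :=
  -(1 / ((Fintype.card A : ℝ) ^ 2)) *
    ∑ a : A, ∑ b ∈ Finset.univ.filter (fun b => b ≠ a),
      Pstar β Q a b * Real.log (Pmod α ℓ a b)

/-- The partial derivative of f with respect to the coordinate i, evaluated at ℓ. -/
noncomputable def partialD {A : Type*} [DecidableEq A] (f : (A → ℝ) → ℝ) (i : A)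
    (ℓ : A → ℝ) : ℝ :=
  deriv (fun t : ℝ => f (Function.update ℓ i t)) (ℓ i)

/-!
Every summand of `L_p` depends on `ℓ` only through `ℓ a - ℓ b`, whose derivative in `ℓ i` is the
incidence coefficient `[a = i] - [b = i]`. Hence both derivatives are again sums over ordered pairs,
weighted by products of incidence coefficients, and only the pairs `(i, j)`, `(j, i)` (or, on the
diagonal, the pairs containing `i`) survive. With `(log σ)' = 1 - σ` and `σ' = σ (1 - σ)`, the two
orientations of a pair contribute `-α² (P*_{ab} w_{ab} + P*_{ba} w_{ba}) = -α² w_{ab}`, because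
`w` is symmetric and `P*_{ab} + P*_{ba} = 1`.
-/

theorem sigmoid_eq_real_sigmoid : sigmoid = Real.sigmoid :=
  funext fun _ => one_div _

theorem hasDerivAt_sigmoid_const_mul (α z : ℝ) :
    HasDerivAt (fun z => sigmoid (α * z)) (α * (sigmoid (α * z) * (1 - sigmoid (α * z)))) z := by
  rw [sigmoid_eq_real_sigmoid, mul_comm α (_ * _)]
  exact (Real.hasDerivAt_sigmoid (α * z)).comp z (hasDerivAt_const_mul α)

theorem hasDerivAt_log_sigmoid_const_mul (α z : ℝ) :
    HasDerivAt (fun z => Real.log (sigmoid (α * z))) (α * (1 - sigmoid (α * z))) z := by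
  have hpos : sigmoid (α * z) ≠ 0 := by rw [sigmoid_eq_real_sigmoid]; exact (Real.sigmoid_pos _).ne'
  refine ((hasDerivAt_sigmoid_const_mul α z).log hpos).congr_deriv ?_
  field_simp

theorem Pstar_add_Pstar_swap {A : Type*} (β : ℝ) (Q : A → ℝ) (a b : A) :
    Pstar β Q a b + Pstar β Q b a = 1 := by
  rw [Pstar, Pstar, show β * (Q b - Q a) = -(β * (Q a - Q b)) by ring, sigmoid_eq_real_sigmoid,
    Real.sigmoid_neg, add_sub_cancel]

theorem Pmod_swap {A : Type*} (α : ℝ) (ℓ : A → ℝ) (a b : A) :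
    Pmod α ℓ b a = 1 - Pmod α ℓ a b := by
  rw [Pmod, Pmod, show α * (ℓ b - ℓ a) = -(α * (ℓ a - ℓ b)) by ring, sigmoid_eq_real_sigmoid,
    Real.sigmoid_neg]

theorem hessW_swap {A : Type*} (α : ℝ) (ℓ : A → ℝ) (a b : A) :
    hessW α ℓ b a = hessW α ℓ a b := by
  rw [hessW, hessW, Pmod_swap]
  ring

theorem Pstar_mul_hessW_add_swap {A : Type*} (α β : ℝ) (Q ℓ : A → ℝ) (a b : A) :
    Pstar β Q a b * hessW α ℓ a b + Pstar β Q b a * hessW α ℓ b a = hessW α ℓ a b := by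
  rw [hessW_swap, ← add_mul, Pstar_add_Pstar_swap, one_mul]

section PairSums

variable {A : Type*} [DecidableEq A]

noncomputable def incidence (i a b : A) : ℝ :=
  (Pi.single i 1 : A → ℝ) a - (Pi.single i 1 : A → ℝ) b

theorem incidence_self (i a : A) : incidence i a a = 0 := sub_self _

theorem sum_filter_ne_mul_incidence (s : Finset A) (a : A) (i : A) (G : A → ℝ) :
    ∑ b ∈ s.filter (· ≠ a), G b * incidence i a b = ∑ b ∈ s, G b * incidence i a b :=
  sum_filter_of_ne fun b _ h hb => h (by rw [hb, incidence_self, mul_zero])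

variable [Fintype A]

theorem hasDerivAt_sum_pairs_update {φ φ' : A → A → ℝ → ℝ}
    (hφ : ∀ a b z, HasDerivAt (φ a b) (φ' a b z) z) (s : A → Finset A) (ℓ : A → ℝ) (i : A) :
    HasDerivAt (fun t => ∑ a, ∑ b ∈ s a, φ a b (Function.update ℓ i t a - Function.update ℓ i t b))
      (∑ a, ∑ b ∈ s a, φ' a b (ℓ a - ℓ b) * incidence i a b) (ℓ i) := by
  have hupdate := hasDerivAt_pi.1 (hasDerivAt_update ℓ i (ℓ i))
  refine HasDerivAt.fun_sum fun a _ => HasDerivAt.fun_sum fun b _ => ?_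
  exact (hφ a b _).comp_of_eq (ℓ i) ((hupdate a).fun_sub (hupdate b)) (by simp)

theorem sum_pairs_mul_incidence_mul_incidence_of_ne (F : A → A → ℝ) {i j : A} (hij : i ≠ j) :
    ∑ a, ∑ b ∈ univ.filter (· ≠ a), F a b * incidence i a b * incidence j a b =
      -(F i j + F j i) := by
  simp only [sum_filter_ne_mul_incidence]
  simp only [incidence, Pi.single_apply, mul_sub, mul_ite, mul_one, mul_zero, sum_sub_distrib,
    sum_ite_irrel, sum_const_zero, sum_ite_eq', mem_univ, ↓reduceIte, hij.symm, sub_zero, zero_sub]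
  ring

theorem sum_pairs_mul_incidence_mul_self (F : A → A → ℝ) (i : A) :
    ∑ a, ∑ b ∈ univ.filter (· ≠ a), F a b * incidence i a b * incidence i a b =
      ∑ b ∈ univ.filter (· ≠ i), (F i b + F b i) := by
  rw [filter_ne', sum_erase_eq_sub (mem_univ i)]
  simp only [sum_filter_ne_mul_incidence]
  simp only [incidence, Pi.single_apply, mul_sub, mul_ite, mul_one, mul_zero, sum_sub_distrib,
    sum_ite_irrel, sum_const_zero, sum_ite_eq', mem_univ, ↓reduceIte, sum_add_distrib]
  ring

end PairSums

section Loss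

variable {A : Type*} [Fintype A] [DecidableEq A] (α β : ℝ) (Q : A → ℝ)

noncomputable def lossPGrad (i : A) (ℓ : A → ℝ) : ℝ :=
  -(1 / ((Fintype.card A : ℝ) ^ 2)) *
    ∑ a : A, ∑ b ∈ univ.filter (· ≠ a),
      α * Pstar β Q a b * (1 - Pmod α ℓ a b) * incidence i a b

theorem hasDerivAt_lossP_update (ℓ : A → ℝ) (i : A) :
    HasDerivAt (fun t => lossP α β Q (Function.update ℓ i t)) (lossPGrad α β Q i ℓ) (ℓ i) := by
  refine (hasDerivAt_sum_pairs_update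
    (φ := fun a b z => Pstar β Q a b * Real.log (sigmoid (α * z)))
    (φ' := fun a b z => α * Pstar β Q a b * (1 - sigmoid (α * z)))
    (fun a b z => ?_) _ ℓ i).const_mul _
  exact ((hasDerivAt_log_sigmoid_const_mul α z).const_mul _).congr_deriv (by ring)

theorem partialD_lossP (i : A) : partialD (lossP α β Q) i = lossPGrad α β Q i :=
  funext fun ℓ => (hasDerivAt_lossP_update α β Q ℓ i).deriv

theorem hasDerivAt_lossPGrad_update (ℓ : A → ℝ) (i j : A) :
    HasDerivAt (fun t => lossPGrad α β Q i (Function.update ℓ j t))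
      (-(1 / ((Fintype.card A : ℝ) ^ 2)) *
        ∑ a : A, ∑ b ∈ univ.filter (· ≠ a),
          -α ^ 2 * (Pstar β Q a b * hessW α ℓ a b) * incidence i a b * incidence j a b)
      (ℓ j) := by
  refine (hasDerivAt_sum_pairs_update
    (φ := fun a b z => α * Pstar β Q a b * (1 - sigmoid (α * z)) * incidence i a b)
    (φ' := fun a b z =>
      -α ^ 2 * (Pstar β Q a b * (sigmoid (α * z) * (1 - sigmoid (α * z)))) * incidence i a b)
    (fun a b z => ?_) _ ℓ j).const_mul _
  exact ((((hasDerivAt_sigmoid_const_mul α z).const_sub 1).const_mul (α * Pstar β Q a b)).mul_const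
    (incidence i a b)).congr_deriv (by ring)

end Loss

theorem stmt_10_general {A : Type*} [Fintype A] [DecidableEq A]
    (Q : A → ℝ) (α β : ℝ) (ℓ : A → ℝ) (i j : A) :
    (i ≠ j →
      HasDerivAt (fun t : ℝ => partialD (lossP α β Q) i (Function.update ℓ j t))
        (-(α ^ 2 / ((Fintype.card A : ℝ) ^ 2)) * hessW α ℓ i j) (ℓ j)) ∧
    HasDerivAt (fun t : ℝ => partialD (lossP α β Q) i (Function.update ℓ i t))
      ((α ^ 2 / ((Fintype.card A : ℝ) ^ 2)) *
        ∑ b ∈ Finset.univ.filter (fun b => b ≠ i), hessW α ℓ i b) (ℓ i) := by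
  simp only [partialD_lossP]
  refine ⟨fun hij => ?_, ?_⟩
  · convert hasDerivAt_lossPGrad_update α β Q ℓ i j using 1
    rw [sum_pairs_mul_incidence_mul_incidence_of_ne _ hij, ← mul_add, Pstar_mul_hessW_add_swap]
    ring
  · convert hasDerivAt_lossPGrad_update α β Q ℓ i i using 1
    simp only [sum_pairs_mul_incidence_mul_self, ← mul_add, Pstar_mul_hessW_add_swap, ← mul_sum]
    ring

/-- the second partial derivatives of L_p exist and are given by
∂²L_p/∂ℓ(j)∂ℓ(i) = −(α²/|𝒜|²)·w_{ij} for i ≠ j, and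
∂²L_p/∂ℓ(i)² = (α²/|𝒜|²)·Σ_{b ≠ i} w_{ib}. -/
theorem stmt_10 {A : Type*} [Fintype A] [DecidableEq A] (hA : 2 ≤ Fintype.card A)
    (Q : A → ℝ) (α β : ℝ) (hα : 0 < α) (hβ : 0 < β) (ℓ : A → ℝ) (i j : A) :
    (i ≠ j →
      HasDerivAt (fun t : ℝ => partialD (lossP α β Q) i (Function.update ℓ j t))
        (-(α ^ 2 / ((Fintype.card A : ℝ) ^ 2)) * hessW α ℓ i j) (ℓ j)) ∧
    HasDerivAt (fun t : ℝ => partialD (lossP α β Q) i (Function.update ℓ i t))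
      ((α ^ 2 / ((Fintype.card A : ℝ) ^ 2)) *
        ∑ b ∈ Finset.univ.filter (fun b => b ≠ i), hessW α ℓ i b) (ℓ i) :=
  stmt_10_general Q α β ℓ i j
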